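/- Let δ: G → W be a W-groupoid on a group G with Borel subgroup B = δ⁻¹(1), such that δ_B: B\G/B → W is a bijection with inverse C. Then (G, B, C) satisfies the Bruhat decomposition axiom (B): for all w ∈ W and s ∈ S, (i) if ws < w then C(ws) ⊆ C(w)C(s) ⊆ C(ws) ∪ C(w), and (ii) if ws > w then C(w)C(s) = C(ws). -/

import Mathlib

open List Pointwise

variable {B : Type*} {W : Type*} [Group W] {M : CoxeterMatrix B}

/-- The Bruhat order on a Coxeter group, defined via the subword property. -/
def BruhatLE (cs : CoxeterSystem M W) (v w : W) : Prop :=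
  ∃ ω : List B, cs.IsReduced ω ∧ cs.wordProd ω = w ∧
    ∃ ω' : List B, ω'.Sublist ω ∧ cs.wordProd ω' = v

variable {G : Type*} [Group G]

/-- A `W`-groupoid structure on a group `G` (a `W`-groupoid with one chamber):
a weak function `δ : G → W` satisfying (WG1), (WG2), (WG3). -/
structure IsGroupWGroupoid (cs : CoxeterSystem M W) (δ : G → W) : Prop where
  weak : ∀ i : B, ∃ g : G, δ g = cs.simple i
  wg1 : δ 1 = 1
  wg2 : ∀ g h : G, BruhatLE cs (δ g * δ h) (δ (g * h))
  wg3 : ∀ (g : G) (i : B), cs.IsRightDescent (δ g) i →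
    ∃ h : G, δ (h⁻¹ * g) = cs.simple i ∧ δ h = δ g * cs.simple i

/-- The fiber `C(w) = δ⁻¹(w)`, which is the double coset `B w B` when
`δ_B : B\G/B → W` is a bijection. -/
def Cset (δ : G → W) (w : W) : Set G := {g : G | δ g = w}

/-- `δ_B : B\G/B → W` is a bijection: `δ` is surjective, and any two elements with
the same image lie in the same `(B,B)`-double coset, where `B = δ⁻¹(1)`. -/
def DeltaBBijective (δ : G → W) : Prop :=
  (∀ w : W, ∃ g : G, δ g = w) ∧
  (∀ g h : G, δ g = δ h → ∃ b ∈ Cset δ 1, ∃ b' ∈ Cset δ 1, h = b * g * b')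

/-! For `δ h = s`, axiom (WG2) applied to `g * h` and to `(g * h) * h⁻¹` squeezes `δ (g * h)`
between `δ g * s` and `δ g` in the Bruhat order; when `s` is an ascent of `δ g`, counting
lengths forces `δ (g * h) = δ g * s`. When `s` is a descent, (WG3) factors `g = k * g'` with
`δ k = δ g * s` and `δ g' = s`, and `g' * h` lies in `C(1)` or in `C(s)`. In the first case
`δ (g * h) = δ k`; in the second, bijectivity of `δ_B` gives `g' * h = b * g' * b'` with
`b, b' ∈ B`, and the ascent case applied to `(k * b) * g'` yields `δ (g * h) = δ g`.
The inclusions `C(v) ⊆ C(v s) C(s)` come from (WG3) for a descent and from weakness plus the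
ascent case otherwise. -/

namespace BruhatLE

variable {cs : CoxeterSystem M W} {v w : W}

theorem length_le (h : BruhatLE cs v w) : cs.length v ≤ cs.length w := by
  obtain ⟨ω, hω, rfl, ω', hsub, rfl⟩ := h
  calc cs.length (cs.wordProd ω') ≤ ω'.length := cs.length_wordProd_le ω'
    _ ≤ ω.length := hsub.length_le
    _ = cs.length (cs.wordProd ω) := hω.symm

theorem eq_of_length_le (h : BruhatLE cs v w) (hl : cs.length w ≤ cs.length v) : v = w := by
  obtain ⟨ω, hω, rfl, ω', hsub, rfl⟩ := h
  have := cs.length_wordProd_le ω'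
  rw [hsub.eq_of_length_le (by rw [← hω]; omega)]

theorem eq_one (h : BruhatLE cs v 1) : v = 1 :=
  cs.length_eq_zero_iff.mp (Nat.le_zero.mp (cs.length_one ▸ h.length_le))

theorem eq_one_or_eq_simple {i : B} (h : BruhatLE cs v (cs.simple i)) :
    v = 1 ∨ v = cs.simple i := by
  have hl := h.length_le
  rw [cs.length_simple] at hl
  rcases Nat.le_one_iff_eq_zero_or_eq_one.mp hl with hl | hl
  · exact Or.inl (cs.length_eq_zero_iff.mp hl)
  · exact Or.inr (h.eq_of_length_le (by rw [cs.length_simple, hl]))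

end BruhatLE

namespace IsGroupWGroupoid

variable {cs : CoxeterSystem M W} {δ : G → W}

theorem delta_inv (hwg : IsGroupWGroupoid cs δ) (g : G) : δ g⁻¹ = (δ g)⁻¹ := by
  have h := hwg.wg2 g g⁻¹
  rw [mul_inv_cancel, hwg.wg1] at h
  exact eq_inv_of_mul_eq_one_right h.eq_one

theorem bruhatLE_delta_mul_mul_inv (hwg : IsGroupWGroupoid cs δ) (g h : G) :
    BruhatLE cs (δ (g * h) * (δ h)⁻¹) (δ g) := by
  have hle := hwg.wg2 (g * h) h⁻¹
  rwa [hwg.delta_inv, mul_inv_cancel_right] at hle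

theorem delta_mul_of_delta_eq_one (hwg : IsGroupWGroupoid cs δ) {b : G} (hb : δ b = 1)
    (g : G) : δ (g * b) = δ g := by
  have hle := hwg.wg2 g b
  have hge := hwg.bruhatLE_delta_mul_mul_inv g b
  rw [hb, mul_one] at hle
  rw [hb, inv_one, mul_one] at hge
  exact (hle.eq_of_length_le hge.length_le).symm

theorem delta_mul_simple_of_not_isRightDescent (hwg : IsGroupWGroupoid cs δ) {g h : G} {i : B}
    (hh : δ h = cs.simple i) (hi : ¬ cs.IsRightDescent (δ g) i) :
    δ (g * h) = δ g * cs.simple i := by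
  have hle := hwg.wg2 g h
  have hge := hwg.bruhatLE_delta_mul_mul_inv g h
  rw [hh] at hle
  rw [hh, cs.inv_simple] at hge
  have hup := cs.not_isRightDescent_iff.mp hi
  have hstep := cs.length_mul_simple (δ (g * h)) i
  have hl₁ := hle.length_le
  have hl₂ := hge.length_le
  have hdown : δ (g * h) * cs.simple i = δ g := hge.eq_of_length_le (by omega)
  rw [← hdown, cs.simple_mul_simple_cancel_right]

theorem delta_mul_of_delta_eq_simple (hwg : IsGroupWGroupoid cs δ) {g h : G} {i : B}
    (hg : δ g = cs.simple i) (hh : δ h = cs.simple i) :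
    δ (g * h) = 1 ∨ δ (g * h) = cs.simple i := by
  have hge := hwg.bruhatLE_delta_mul_mul_inv g h
  rw [hg, hh, cs.inv_simple] at hge
  rcases hge.eq_one_or_eq_simple with hp | hp
  · exact Or.inr (by rw [mul_eq_one_iff_eq_inv.mp hp, cs.inv_simple])
  · exact Or.inl (mul_eq_right.mp hp)

theorem delta_mul_simple_of_isRightDescent (hwg : IsGroupWGroupoid cs δ)
    (hbij : DeltaBBijective δ) {g h : G} {i : B} (hh : δ h = cs.simple i)
    (hi : cs.IsRightDescent (δ g) i) :
    δ (g * h) = δ g * cs.simple i ∨ δ (g * h) = δ g := by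
  obtain ⟨k, hk₂, hk⟩ := hwg.wg3 g i hi
  have hsplit : g * h = k * (k⁻¹ * g * h) := by group
  rcases hwg.delta_mul_of_delta_eq_simple hk₂ hh with hp | hp
  · exact Or.inl (by rw [hsplit, hwg.delta_mul_of_delta_eq_one hp, hk])
  · obtain ⟨b, hb, b', hb', hpb⟩ := hbij.2 _ _ (hk₂.trans hp.symm)
    have hkb : δ (k * b) = δ g * cs.simple i := (hwg.delta_mul_of_delta_eq_one hb k).trans hk
    have hasc : ¬ cs.IsRightDescent (δ (k * b)) i :=
      hkb ▸ cs.isRightDescent_iff_not_isRightDescent_mul.mp hi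
    refine Or.inr ?_
    calc δ (g * h) = δ (k * b * (k⁻¹ * g) * b') := by rw [hsplit, hpb]; group
      _ = δ (k * b * (k⁻¹ * g)) := hwg.delta_mul_of_delta_eq_one hb' _
      _ = δ g := by
        rw [hwg.delta_mul_simple_of_not_isRightDescent hk₂ hasc, hkb,
          cs.simple_mul_simple_cancel_right]

theorem mul_cset_simple_subset_of_not_isRightDescent (hwg : IsGroupWGroupoid cs δ) {v : W}
    {i : B} (hi : ¬ cs.IsRightDescent v i) :
    Cset δ v * Cset δ (cs.simple i) ⊆ Cset δ (v * cs.simple i) := by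
  rintro _ ⟨g, rfl, h, hh, rfl⟩
  exact hwg.delta_mul_simple_of_not_isRightDescent hh hi

theorem mul_cset_simple_subset_of_isRightDescent (hwg : IsGroupWGroupoid cs δ)
    (hbij : DeltaBBijective δ) {v : W} {i : B} (hi : cs.IsRightDescent v i) :
    Cset δ v * Cset δ (cs.simple i) ⊆ Cset δ (v * cs.simple i) ∪ Cset δ v := by
  rintro _ ⟨g, rfl, h, hh, rfl⟩
  exact hwg.delta_mul_simple_of_isRightDescent hbij hh hi

theorem cset_subset_mul_cset_simple (hwg : IsGroupWGroupoid cs δ) (v : W) (i : B) :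
    Cset δ v ⊆ Cset δ (v * cs.simple i) * Cset δ (cs.simple i) := by
  rintro g rfl
  by_cases hi : cs.IsRightDescent (δ g) i
  · obtain ⟨k, hk₂, hk⟩ := hwg.wg3 g i hi
    exact ⟨k, hk, k⁻¹ * g, hk₂, mul_inv_cancel_left k g⟩
  · obtain ⟨h, hh⟩ := hwg.weak i
    refine ⟨g * h, hwg.delta_mul_simple_of_not_isRightDescent hh hi, h⁻¹, ?_,
      mul_inv_cancel_right g h⟩
    change δ h⁻¹ = cs.simple i
    rw [hwg.delta_inv, hh, cs.inv_simple]

end IsGroupWGroupoid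

/-- Let `δ : G → W` be a `W`-groupoid with one chamber such that `δ_B` is a
bijection. Then axiom (B) holds: for all `w ∈ W` and `s ∈ S`,
(i) if `ws < w` then `C(ws) ⊆ C(w)C(s) ⊆ C(ws) ∪ C(w)`, and
(ii) if `ws > w` then `C(w)C(s) = C(ws)`. -/
theorem stmt13 (cs : CoxeterSystem M W) (δ : G → W)
    (hwg : IsGroupWGroupoid cs δ) (hbij : DeltaBBijective δ) (w : W) (i : B) :
    (cs.IsRightDescent w i →
      Cset δ (w * cs.simple i) ⊆ Cset δ w * Cset δ (cs.simple i) ∧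
      Cset δ w * Cset δ (cs.simple i) ⊆ Cset δ (w * cs.simple i) ∪ Cset δ w) ∧
    (¬ cs.IsRightDescent w i →
      Cset δ w * Cset δ (cs.simple i) = Cset δ (w * cs.simple i)) := by
  have hback : Cset δ (w * cs.simple i) ⊆ Cset δ w * Cset δ (cs.simple i) := by
    simpa only [cs.simple_mul_simple_cancel_right] using
      hwg.cset_subset_mul_cset_simple (w * cs.simple i) i
  exact ⟨fun hi => ⟨hback, hwg.mul_cset_simple_subset_of_isRightDescent hbij hi⟩,
    fun hi => (hwg.mul_cset_simple_subset_of_not_isRightDescent hi).antisymm hback⟩
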